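/- Let K be a subgroup of ℤ² and let k be the greatest common divisor of the greatest divisors of all nonzero vectors of K. Then K contains a vector whose greatest divisor is exactly k; equivalently, if the gcd of all coordinates of all vectors in K is k, some single vector of K has coordinate gcd equal to k. -/

import Mathlib

/-!
Row reduction gives `u = (a, b)` and `v = (0, c)` in `K` such that `a` generates the first
coordinates of `K` and `c` the second coordinates of `K ∩ (0 × ℤ)`. Every vector of `K` is then
an integer combination of `u` and `v`, so the gcd `k` of all coordinates of `K` is `gcd(a, b, c)`.
The vector `u + n v = (a, b + n c)` has coordinate gcd `k` once `n` is chosen such that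
`gcd(a, b + n c) = gcd(a, b, c)`; after dividing out `k`, take for `n` the product of the primes
dividing `a` but not `b`.
-/

namespace Int

theorem exists_gcd_add_mul_eq_one {a b c : ℤ} (ha : a ≠ 0) (h : gcd a (gcd b c) = 1) :
    ∃ n : ℤ, gcd a (b + n * c) = 1 := by
  classical
  -- every prime factor of `a` divides exactly one of `b` and `n`
  set n : ℤ := ∏ q ∈ a.natAbs.primeFactors.filter (fun q : ℕ => ¬ (q : ℤ) ∣ b), (q : ℤ)
  refine ⟨n, Nat.coprime_of_dvd fun p hp hpa hpbnc => ?_⟩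
  rw [← Int.natCast_dvd] at hpa hpbnc
  have hpZ : Prime (p : ℤ) := Nat.prime_iff_prime_int.mp hp
  have hpn : (p : ℤ) ∣ n ↔ ¬ (p : ℤ) ∣ b := by
    rw [hpZ.dvd_finsetProd_iff]
    simp only [Finset.mem_filter, and_assoc]
    constructor
    · rintro ⟨q, hq, hqb, hpq⟩
      rwa [(Nat.prime_dvd_prime_iff_eq hp (Nat.prime_of_mem_primeFactors hq)).mp
        (Int.natCast_dvd_natCast.mp hpq)]
    · intro hpb
      exact ⟨p, Nat.mem_primeFactors.mpr ⟨hp, Int.natCast_dvd.mp hpa, Int.natAbs_ne_zero.mpr ha⟩,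
        hpb, dvd_rfl⟩
  by_cases hpb : (p : ℤ) ∣ b
  · have hpc : (p : ℤ) ∣ c :=
      (hpZ.dvd_mul.mp ((dvd_add_right hpb).mp hpbnc)).resolve_left (hpn.not_left.mpr hpb)
    have hp1 : (p : ℤ) ∣ (gcd a (gcd b c) : ℤ) := dvd_coe_gcd hpa (dvd_coe_gcd hpb hpc)
    rw [h, Nat.cast_one] at hp1
    exact hpZ.not_dvd_one hp1
  · exact hpb ((dvd_add_left ((hpn.mpr hpb).mul_right c)).mp hpbnc)

theorem exists_gcd_add_mul_eq_gcd {a b c : ℤ} (h : a = 0 → c ∣ b) :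
    ∃ n : ℤ, gcd a (b + n * c) = gcd a (gcd b c) := by
  by_cases ha : a = 0
  · obtain ⟨d, rfl⟩ := h ha
    refine ⟨1 - d, ?_⟩
    rw [ha, show c * d + (1 - d) * c = c by ring, gcd_zero_left, gcd_zero_left,
      gcd_comm, gcd_mul_right_right, natAbs_natCast]
  set g := gcd a (gcd b c)
  obtain ⟨a', ha'⟩ : (g : ℤ) ∣ a := gcd_dvd_left _ _
  obtain ⟨b', hb'⟩ : (g : ℤ) ∣ b := (gcd_dvd_right _ _).trans (gcd_dvd_left _ _)
  obtain ⟨c', hc'⟩ : (g : ℤ) ∣ c := (gcd_dvd_right _ _).trans (gcd_dvd_right _ _)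
  have hg0 : 0 < g := gcd_pos_of_ne_zero_left _ ha
  have hcoprime : gcd a' (gcd b' c') = 1 := by
    refine Nat.eq_of_mul_eq_mul_left hg0 ?_
    rw [mul_one]
    conv_rhs => rw [show g = gcd a (gcd b c) from rfl, ha', hb', hc']
    rw [gcd_mul_left, natAbs_natCast, Nat.cast_mul, gcd_mul_left, natAbs_natCast]
  obtain ⟨n, hn⟩ := exists_gcd_add_mul_eq_one (right_ne_zero_of_mul (ha' ▸ ha)) hcoprime
  refine ⟨n, ?_⟩
  rw [ha', hb', hc', show (g : ℤ) * b' + n * (g * c') = g * (b' + n * c') by ring, gcd_mul_left,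
    natAbs_natCast, hn, mul_one]

end Int

theorem AddSubgroup.exists_mem_forall_dvd (H : AddSubgroup ℤ) : ∃ a ∈ H, ∀ x ∈ H, a ∣ x := by
  obtain ⟨a, rfl⟩ := Int.subgroup_cyclic H
  refine ⟨a, AddSubgroup.mem_closure_singleton_self a, fun x hx => ?_⟩
  obtain ⟨n, rfl⟩ := AddSubgroup.mem_closure_singleton.mp hx
  exact Dvd.intro_left n (smul_eq_mul n a).symm

theorem exists_echelon_pair (K : AddSubgroup (Fin 2 → ℤ)) :
    ∃ u ∈ K, ∃ v ∈ K, v 0 = 0 ∧ (∀ w ∈ K, u 0 ∣ w 0) ∧ ∀ w ∈ K, w 0 = 0 → v 1 ∣ w 1 := by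
  let π₀ := Pi.evalAddMonoidHom (fun _ : Fin 2 => ℤ) 0
  let π₁ := Pi.evalAddMonoidHom (fun _ : Fin 2 => ℤ) 1
  obtain ⟨_, ⟨u, hu, rfl⟩, hu_dvd⟩ := (K.map π₀).exists_mem_forall_dvd
  obtain ⟨_, ⟨v, ⟨hv, hv0⟩, rfl⟩, hv_dvd⟩ := ((K ⊓ π₀.ker).map π₁).exists_mem_forall_dvd
  exact ⟨u, hu, v, hv, hv0, fun w hw => hu_dvd _ ⟨w, hw, rfl⟩,
    fun w hw hw0 => hv_dvd _ ⟨w, ⟨hw, hw0⟩, rfl⟩⟩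

theorem dvd_apply_of_echelon {K : AddSubgroup (Fin 2 → ℤ)} {u v : Fin 2 → ℤ} (hu : u ∈ K)
    (hu_dvd : ∀ w ∈ K, u 0 ∣ w 0) (hv_dvd : ∀ w ∈ K, w 0 = 0 → v 1 ∣ w 1) {t : ℤ}
    (htu₀ : t ∣ u 0) (htu₁ : t ∣ u 1) (htv : t ∣ v 1) : ∀ w ∈ K, ∀ i, t ∣ w i := by
  intro w hw
  obtain ⟨m, hm⟩ := hu_dvd w hw
  have hv_dvd_rest : v 1 ∣ (w - m • u) 1 :=
    hv_dvd _ (sub_mem hw (zsmul_mem hu m)) (by simp [hm, mul_comm])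
  have hw₁ : w 1 = (w - m • u) 1 + m * u 1 := by simp
  rw [Fin.forall_fin_two, hm, hw₁]
  exact ⟨htu₀.mul_right m, dvd_add (htv.trans hv_dvd_rest) (htu₁.mul_left m)⟩

theorem exists_vector_with_gcd (K : AddSubgroup (Fin 2 → ℤ)) (k : ℕ)
    (hdvd : ∀ w ∈ K, ∀ i, (k : ℤ) ∣ w i)
    (hgreatest : ∀ t : ℕ, (∀ w ∈ K, ∀ i, (t : ℤ) ∣ w i) → t ∣ k) :
    ∃ w ∈ K, Int.gcd (w 0) (w 1) = k := by
  obtain ⟨u, hu, v, hv, hv0, hu_dvd, hv_dvd⟩ := exists_echelon_pair K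
  set g := Int.gcd (u 0) (Int.gcd (u 1) (v 1))
  have hgk : g = k := by
    refine Nat.dvd_antisymm (hgreatest g (dvd_apply_of_echelon hu hu_dvd hv_dvd ?_ ?_ ?_)) ?_
    · exact Int.gcd_dvd_left _ _
    · exact (Int.gcd_dvd_right _ _).trans (Int.gcd_dvd_left _ _)
    · exact (Int.gcd_dvd_right _ _).trans (Int.gcd_dvd_right _ _)
    · exact Int.natCast_dvd_natCast.mp
        (Int.dvd_coe_gcd (hdvd u hu 0) (Int.dvd_coe_gcd (hdvd u hu 1) (hdvd v hv 1)))
  obtain ⟨n, hn⟩ := Int.exists_gcd_add_mul_eq_gcd (hv_dvd u hu)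
  refine ⟨u + n • v, add_mem hu (zsmul_mem hv n), ?_⟩
  rw [← hgk]
  simpa [hv0] using hn
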